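/- With the pseudorandom mapping watermark, defining Ŷ = g(X) with probability p_w and Ŷ = Y with probability 1 - p_w (selection Bernoulli independent of everything, and the uniform U defining g independent of (X,Y)), the marginal distribution of Ŷ equals the marginal distribution of Y. -/

import Mathlib

open MeasureTheory ProbabilityTheory

/-!
On the event `B = false` the watermark outputs `k` exactly when `U` falls in the `k`-th cell
`[∑_{i<k} y i, ∑_{i≤k} y i)` of the partition of `[0, 1)`, an event of probability `y k`;
on `B = true` it outputs `Y`, which equals `k` with the same probability. Since `B` is
independent of both `U` and `Y`, the law of `Ŷ` is the `B`-mixture of two equal laws.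
-/

section Selection

variable {Ω β γ : Type*} [MeasurableSpace Ω] [MeasurableSpace β] [MeasurableSpace γ]
  {μ : Measure Ω} {V : Ω → β} {W : Ω → γ} {B : Ω → Bool} {s : Set β} {t : Set γ}

theorem measure_select_of_indepFun (hB : Measurable B) (hVB : IndepFun V B μ)
    (hWB : IndepFun W B μ) (hs : MeasurableSet s) (ht : MeasurableSet t) :
    μ {ω | if B ω = false then V ω ∈ s else W ω ∈ t} =
      μ (V ⁻¹' s) * μ (B ⁻¹' {false}) + μ (W ⁻¹' t) * μ (B ⁻¹' {true}) := by
  set S := {ω | if B ω = false then V ω ∈ s else W ω ∈ t}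
  have h_false : S ∩ B ⁻¹' {false} = V ⁻¹' s ∩ B ⁻¹' {false} := by
    ext ω; by_cases h : B ω = false <;> simp [S, h]
  have h_true : S \ B ⁻¹' {false} = W ⁻¹' t ∩ B ⁻¹' {true} := by
    ext ω; by_cases h : B ω = false <;> simp [S, h]
  rw [← measure_inter_add_sdiff S (hB (measurableSet_singleton false)), h_false, h_true,
    hVB.measure_inter_preimage_eq_mul _ _ hs (measurableSet_singleton _),
    hWB.measure_inter_preimage_eq_mul _ _ ht (measurableSet_singleton _)]

theorem measure_select_of_indepFun_of_eq [IsProbabilityMeasure μ] (hB : Measurable B)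
    (hVB : IndepFun V B μ) (hWB : IndepFun W B μ) (hs : MeasurableSet s) (ht : MeasurableSet t)
    (h : μ (V ⁻¹' s) = μ (W ⁻¹' t)) :
    μ {ω | if B ω = false then V ω ∈ s else W ω ∈ t} = μ (W ⁻¹' t) := by
  have h_compl : B ⁻¹' {true} = (B ⁻¹' {false})ᶜ := by ext; simp
  rw [measure_select_of_indepFun hB hVB hWB hs ht, h, ← mul_add, h_compl,
    measure_add_measure_compl (hB (measurableSet_singleton false)), measure_univ, mul_one]

end Selection

theorem pseudorandom_watermark_marginal_general {Ω α : Type*} [MeasurableSpace Ω]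
    [MeasurableSpace α]
    (μ : Measure Ω) [IsProbabilityMeasure μ]
    (n : ℕ) (y : Fin (n + 1) → ℝ)
    (hy0 : ∀ k, 0 ≤ y k) (hy1 : ∑ k, y k = 1)
    (X : Ω → α) (Y : Ω → Fin (n + 1)) (U : Ω → ℝ) (B : Ω → Bool)
    (hBm : Measurable B)
    (hY : ∀ k, (μ {ω | Y ω = k}).toReal = y k)
    (hUunif : ∀ a b : ℝ, 0 ≤ a → a ≤ b → b ≤ 1 →
      (μ {ω | a ≤ U ω ∧ U ω < b}).toReal = b - a)
    (hBIndep : IndepFun (fun ω => (X ω, Y ω, U ω)) B μ)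
    (g : α → Ω → Fin (n + 1))
    (hg : ∀ (x : α) (ω : Ω) (k : Fin (n + 1)),
      g x ω = k ↔ (∑ i ∈ Finset.Iio k, y i) ≤ U ω ∧ U ω < (∑ i ∈ Finset.Iio k, y i) + y k)
    (Yhat : Ω → Fin (n + 1))
    (hYhat : ∀ ω, Yhat ω = if B ω = false then g (X ω) ω else Y ω) :
    ∀ k : Fin (n + 1), (μ {ω | Yhat ω = k}).toReal = (μ {ω | Y ω = k}).toReal := by
  intro k
  set a := ∑ i ∈ Finset.Iio k, y i
  have ha : 0 ≤ a := Finset.sum_nonneg fun i _ => hy0 i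
  have h_cell_le : a + y k ≤ 1 := by
    rw [Finset.sum_Iio_add_eq_sum_Iic, ← hy1]
    exact Finset.sum_le_univ_sum_of_nonneg hy0
  have h_cell : μ (U ⁻¹' Set.Ico a (a + y k)) = μ (Y ⁻¹' {k}) := by
    refine (ENNReal.toReal_eq_toReal_iff' (measure_ne_top _ _) (measure_ne_top _ _)).1 ?_
    rw [show U ⁻¹' Set.Ico a (a + y k) = {ω | a ≤ U ω ∧ U ω < a + y k} from rfl,
      hUunif a _ ha (le_add_of_nonneg_right (hy0 k)) h_cell_le, add_sub_cancel_left]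
    exact (hY k).symm
  have hUB : IndepFun U B μ := hBIndep.comp (measurable_snd.comp measurable_snd) measurable_id
  have hYB : IndepFun Y B μ := hBIndep.comp (measurable_fst.comp measurable_snd) measurable_id
  have h_event : {ω | Yhat ω = k} =
      {ω | if B ω = false then U ω ∈ Set.Ico a (a + y k) else Y ω ∈ ({k} : Set _)} := by
    ext ω
    by_cases h : B ω = false <;> simp [hYhat, h, hg, a]
  rw [h_event, measure_select_of_indepFun_of_eq hBm hUB hYB measurableSet_Ico
    (measurableSet_singleton k) h_cell]
  rfl

/-- The pseudorandom mapping watermark preserves the marginal distribution of Y. -/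
theorem pseudorandom_watermark_marginal {Ω α : Type*} [MeasurableSpace Ω]
    [MeasurableSpace α]
    (μ : Measure Ω) [IsProbabilityMeasure μ]
    (n : ℕ) (y : Fin (n + 1) → ℝ)
    (hy0 : ∀ k, 0 ≤ y k) (hy1 : ∑ k, y k = 1)
    (X : Ω → α) (Y : Ω → Fin (n + 1)) (U : Ω → ℝ) (B : Ω → Bool)
    (hXm : Measurable X) (hYm : Measurable Y) (hUm : Measurable U) (hBm : Measurable B)
    (hY : ∀ k, (μ {ω | Y ω = k}).toReal = y k)
    (hUrange : ∀ ω, 0 ≤ U ω ∧ U ω < 1)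
    (hUunif : ∀ a b : ℝ, 0 ≤ a → a ≤ b → b ≤ 1 →
      (μ {ω | a ≤ U ω ∧ U ω < b}).toReal = b - a)
    (hUIndep : IndepFun (fun ω => (X ω, Y ω)) U μ)
    (p_w : ℝ) (hp0 : 0 < p_w) (hp1 : p_w < 1)
    (hB : (μ {ω | B ω = false}).toReal = p_w)
    (hBIndep : IndepFun (fun ω => (X ω, Y ω, U ω)) B μ)
    (g : α → Ω → Fin (n + 1))
    (hg : ∀ (x : α) (ω : Ω) (k : Fin (n + 1)),
      g x ω = k ↔ (∑ i ∈ Finset.Iio k, y i) ≤ U ω ∧ U ω < (∑ i ∈ Finset.Iio k, y i) + y k)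
    (Yhat : Ω → Fin (n + 1))
    (hYhat : ∀ ω, Yhat ω = if B ω = false then g (X ω) ω else Y ω) :
    ∀ k : Fin (n + 1), (μ {ω | Yhat ω = k}).toReal = (μ {ω | Y ω = k}).toReal :=
  pseudorandom_watermark_marginal_general μ n y hy0 hy1 X Y U B hBm hY hUunif hBIndep g hg Yhat
    hYhat
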